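/- Let F ∈ ℂ^{n×n}, v ∈ ℂ^n, Z ∈ ℂ^{n×j}, h ∈ ℂ^{1×j} and let H ∈ ℂ^{j×j} be upper triangular with diagonal entries s_1, …, s_j. Assume: the matrix [v Z] ∈ ℂ^{n×(j+1)} has full column rank; F·Z = v·h + Z·H; every s_i has positive real part; and no s_i is an eigenvalue of F. Then, for any B ∈ ℂ^{n×m}, the algebraic Riccati equation H·Y + Y·Hᴴ − Y·(Zᴴ B Bᴴ Z + hᴴ h)·Y = 0 has a unique positive definite solution Y ∈ ℂ^{j×j}. -/

import Mathlib

/-!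
For invertible `Y` the Riccati equation is equivalent to the Lyapunov equation
`Hᴴ X + X H = M` for `X = Y⁻¹`, where `M = ZᴴBBᴴZ + hᴴh ⪰ 0`. As the spectrum of `H` lies in the
open right half-plane, its Cayley transform `A = (H - 1)(H + 1)⁻¹` has spectral radius `< 1`, and
the Lyapunov equation becomes the Stein equation `X - AᴴXA = 2 (H + 1)⁻ᴴ M (H + 1)⁻¹`. Iterating
it along `Aᵏ → 0` shows that the solution is unique and positive semidefinite. Its kernel is
`H`-invariant and contained in the kernel of `M`, hence of `h`; so an eigenvector `x` of `H` in it,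
with eigenvalue some `sᵢ`, would make `Zx ≠ 0` an eigenvector of `F` for `sᵢ`, because
`F Z x = v h x + Z H x`. Hence `X` is positive definite.
-/

open Matrix Filter Topology
open scoped ComplexOrder

theorem spectrum.tendsto_pow_atTop_nhds_zero_of_norm_lt_one {A : Type*} [NormedRing A]
    [NormedAlgebra ℂ A] [CompleteSpace A] {a : A} (ha : ∀ μ ∈ spectrum ℂ a, ‖μ‖ < 1) :
    Tendsto (a ^ ·) atTop (𝓝 0) := by
  have hρ : spectralRadius ℂ a < 1 := by
    rcases (spectrum ℂ a).eq_empty_or_nonempty with h | h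
    · simp [spectralRadius, h]
    · simpa using spectrum.spectralRadius_lt_of_forall_lt_of_nonempty h (r := 1)
        fun μ hμ => by simpa [← NNReal.coe_lt_coe] using ha μ hμ
  obtain ⟨r, hρr, hr1⟩ := ENNReal.lt_iff_exists_nnreal_btwn.mp hρ
  have hbound : ∀ᶠ n in atTop, ‖a ^ n‖ ≤ (r : ℝ) ^ n := by
    have hgelfand := spectrum.pow_nnnorm_pow_one_div_tendsto_nhds_spectralRadius a
    filter_upwards [hgelfand.eventually_lt_const hρr, eventually_ne_atTop 0] with n hn hn0
    rw [one_div] at hn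
    have := ENNReal.pow_lt_pow_left hn0 hn
    rw [ENNReal.rpow_inv_natCast_pow hn0] at this
    exact_mod_cast this.le
  exact squeeze_zero_norm' hbound
    (tendsto_pow_atTop_nhds_zero_of_lt_one r.2 (by exact_mod_cast hr1))

theorem Complex.norm_lt_one_of_re_one_add_div_one_sub_pos {μ : ℂ}
    (h : 0 < ((1 + μ) / (1 - μ)).re) : ‖μ‖ < 1 := by
  rw [Complex.div_re] at h
  simp only [Complex.add_re, Complex.sub_re, Complex.one_re, Complex.add_im, Complex.sub_im,
    Complex.one_im] at h
  rw [← add_div, div_pos_iff] at h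
  have hN := Complex.normSq_nonneg (1 - μ)
  rw [← sq_lt_one_iff₀ (norm_nonneg μ), Complex.sq_norm, Complex.normSq_apply]
  rcases h with ⟨h, -⟩ | ⟨-, h⟩
  · nlinarith
  · linarith

namespace Matrix

section

variable {ι : Type*} [Fintype ι]

theorem star_mulVec_dotProduct_mulVec {m : Type*} [Fintype m] (A : Matrix m ι ℂ)
    (X : Matrix m m ℂ) (x : ι → ℂ) :
    star (A *ᵥ x) ⬝ᵥ X *ᵥ (A *ᵥ x) = star x ⬝ᵥ (Aᴴ * X * A) *ᵥ x := by
  rw [star_mulVec, ← dotProduct_mulVec, mulVec_mulVec, mulVec_mulVec, Matrix.mul_assoc]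

theorem PosSemidef.mulVec_eq_zero_of_add_mulVec_eq_zero {𝕜 : Type*} [RCLike 𝕜]
    {P Q : Matrix ι ι 𝕜} (hP : P.PosSemidef) (hQ : Q.PosSemidef) {x : ι → 𝕜}
    (h : (P + Q) *ᵥ x = 0) : Q *ᵥ x = 0 := by
  rw [← hQ.dotProduct_mulVec_zero_iff]
  have h0 : star x ⬝ᵥ P *ᵥ x + star x ⬝ᵥ Q *ᵥ x = 0 := by
    rw [← dotProduct_add, ← add_mulVec, h, dotProduct_zero]
  exact ((add_eq_zero_iff_of_nonneg (hP.dotProduct_mulVec_nonneg x)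
    (hQ.dotProduct_mulVec_nonneg x)).mp h0).2

theorem exists_mulVec_eq_smul_of_mulVec_mem {K : Type*} [Field K] [IsAlgClosed K]
    {A : Matrix ι ι K} {S : Submodule K (ι → K)} (hS : S ≠ ⊥) (hAS : ∀ x ∈ S, A *ᵥ x ∈ S) :
    ∃ μ : K, ∃ x ∈ S, x ≠ 0 ∧ A *ᵥ x = μ • x := by
  have : Nontrivial S := Submodule.nontrivial_iff_ne_bot.mpr hS
  obtain ⟨μ, hμ⟩ := Module.End.exists_eigenvalue (A.mulVecLin.restrict hAS)
  obtain ⟨⟨x, hxS⟩, hx⟩ := hμ.exists_hasEigenvector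
  refine ⟨μ, x, hxS, fun h => hx.2 (by simp [h]), ?_⟩
  exact congrArg Subtype.val hx.apply_eq_smul

variable [DecidableEq ι]

theorem mem_spectrum_iff_exists_mulVec_eq_smul {K : Type*} [Field K] {A : Matrix ι ι K}
    {μ : K} : μ ∈ spectrum K A ↔ ∃ x ≠ 0, A *ᵥ x = μ • x := by
  rw [← spectrum_toLin', ← Module.End.hasEigenvalue_iff_mem_spectrum,
    Module.End.hasEigenvalue_iff, Submodule.ne_bot_iff]
  simp only [Module.End.mem_eigenspace_iff, toLin'_apply]
  exact ⟨fun ⟨x, h1, h2⟩ => ⟨x, h2, h1⟩, fun ⟨x, h1, h2⟩ => ⟨x, h2, h1⟩⟩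

theorem IsUpperTriangular.spectrum_eq {K : Type*} [Field K] [LinearOrder ι] {A : Matrix ι ι K}
    (hA : A.IsUpperTriangular) : spectrum K A = Set.range A.diag := by
  ext μ
  rw [mem_spectrum_iff_isRoot_charpoly, charpoly_of_isUpperTriangular A hA, Polynomial.isRoot_prod]
  simp [sub_eq_zero, eq_comm]

theorem tendsto_conjTranspose_pow_mul_mul_pow {A : Matrix ι ι ℂ}
    (hA : Tendsto (A ^ ·) atTop (𝓝 0)) (X : Matrix ι ι ℂ) :
    Tendsto (fun k : ℕ => (A ^ k)ᴴ * X * A ^ k) atTop (𝓝 0) := by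
  simpa only [star_zero, zero_mul, mul_zero, star_eq_conjTranspose] using
    (hA.star.mul_const X).mul hA

theorem eq_zero_of_conjTranspose_mul_mul_eq {A X : Matrix ι ι ℂ}
    (hA : Tendsto (A ^ ·) atTop (𝓝 0)) (hX : Aᴴ * X * A = X) : X = 0 := by
  have hpow : ∀ k : ℕ, (A ^ k)ᴴ * X * A ^ k = X := by
    intro k
    induction k with
    | zero => simp
    | succ k ih =>
      calc (A ^ (k + 1))ᴴ * X * A ^ (k + 1) = (A ^ k)ᴴ * (Aᴴ * X * A) * A ^ k := by
            rw [pow_succ', conjTranspose_mul]; noncomm_ring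
        _ = X := by rw [hX, ih]
  exact tendsto_nhds_unique tendsto_const_nhds
    ((tendsto_conjTranspose_pow_mul_mul_pow hA X).congr hpow)

theorem posSemidef_of_posSemidef_sub_conjTranspose_mul_mul {A X : Matrix ι ι ℂ}
    (hA : Tendsto (A ^ ·) atTop (𝓝 0)) (hX : X.IsHermitian)
    (hXA : (X - Aᴴ * X * A).PosSemidef) : X.PosSemidef := by
  refine posSemidef_iff_dotProduct_mulVec.mpr ⟨hX, fun x => ?_⟩
  set q : ℕ → ℂ := fun k => star (A ^ k *ᵥ x) ⬝ᵥ X *ᵥ (A ^ k *ᵥ x)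
  have hq : Antitone q := by
    refine antitone_nat_of_succ_le fun k => ?_
    have := (posSemidef_iff_dotProduct_mulVec.mp hXA).2 (A ^ k *ᵥ x)
    rw [sub_mulVec, dotProduct_sub, ← star_mulVec_dotProduct_mulVec, sub_nonneg] at this
    simpa only [q, pow_succ', ← mulVec_mulVec] using this
  have hlim : Tendsto q atTop (𝓝 0) := by
    have hcont : Continuous fun N : Matrix ι ι ℂ => star x ⬝ᵥ N *ᵥ x :=
      continuous_const.dotProduct (continuous_id.matrix_mulVec continuous_const)
    have h0 := (hcont.tendsto 0).comp (tendsto_conjTranspose_pow_mul_mul_pow hA X)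
    rw [zero_mulVec, dotProduct_zero] at h0
    exact h0.congr fun k => (star_mulVec_dotProduct_mulVec _ _ _).symm
  simpa [q] using hq.le_of_tendsto hlim 0

noncomputable def cayley (H : Matrix ι ι ℂ) : Matrix ι ι ℂ := (H - 1) * (H + 1)⁻¹

def lyapunovMap (H : Matrix ι ι ℂ) : Matrix ι ι ℂ →ₗ[ℂ] Matrix ι ι ℂ :=
  LinearMap.mulLeft ℂ Hᴴ + LinearMap.mulRight ℂ H

@[simp]
theorem lyapunovMap_apply (H X : Matrix ι ι ℂ) : lyapunovMap H X = Hᴴ * X + X * H := rfl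

theorem lyapunovMap_conjTranspose (H X : Matrix ι ι ℂ) :
    lyapunovMap H Xᴴ = (lyapunovMap H X)ᴴ := by
  simp [conjTranspose_mul, add_comm]

theorem sub_conjTranspose_cayley_mul_mul {H : Matrix ι ι ℂ} (hH : IsUnit (H + 1))
    (X : Matrix ι ι ℂ) :
    X - (cayley H)ᴴ * X * cayley H = 2 • ((H + 1)⁻¹ᴴ * lyapunovMap H X * (H + 1)⁻¹) := by
  have hC : (H + 1) * (H + 1)⁻¹ = 1 := mul_nonsing_inv _ ((isUnit_iff_isUnit_det _).mp hH)
  have hCH : (H + 1)⁻¹ᴴ * (Hᴴ + 1) = 1 := by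
    simpa [conjTranspose_mul] using congrArg conjTranspose hC
  calc X - (cayley H)ᴴ * X * cayley H
      = (H + 1)⁻¹ᴴ * (Hᴴ + 1) * X * ((H + 1) * (H + 1)⁻¹) - (cayley H)ᴴ * X * cayley H := by
        rw [hC, hCH, Matrix.one_mul, Matrix.mul_one]
    _ = _ := by
        simp only [cayley, conjTranspose_mul, conjTranspose_sub, conjTranspose_one,
          lyapunovMap_apply]
        noncomm_ring

theorem isUnit_add_one_of_re_pos {H : Matrix ι ι ℂ} (hH : ∀ μ ∈ spectrum ℂ H, 0 < μ.re) :
    IsUnit (H + 1) := by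
  have h : (-1 : ℂ) ∉ spectrum ℂ H := fun h => absurd (hH _ h) (by norm_num)
  rw [spectrum.notMem_iff] at h
  simpa [sub_eq_add_neg, add_comm] using h.neg

theorem norm_lt_one_of_mem_spectrum_cayley {H : Matrix ι ι ℂ}
    (hH : ∀ μ ∈ spectrum ℂ H, 0 < μ.re) {μ : ℂ} (hμ : μ ∈ spectrum ℂ (cayley H)) : ‖μ‖ < 1 := by
  obtain ⟨x, hx, hAx⟩ := mem_spectrum_iff_exists_mulVec_eq_smul.mp hμ
  set y := (H + 1)⁻¹ *ᵥ x
  have hxy : (H + 1) *ᵥ y = x := by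
    rw [mulVec_mulVec, mul_nonsing_inv _ ((isUnit_iff_isUnit_det _).mp
      (isUnit_add_one_of_re_pos hH)), one_mulVec]
  have hy : y ≠ 0 := fun h => hx (by rw [← hxy, h, mulVec_zero])
  -- `y` is an eigenvector of `H` for `(1 + μ) / (1 - μ)`, whose Cayley transform is `μ`
  have hHy : (1 - μ) • (H *ᵥ y) = (1 + μ) • y := by
    have : (H - 1) *ᵥ y = μ • ((H + 1) *ᵥ y) := by rw [hxy, ← hAx, cayley, ← mulVec_mulVec]
    rw [sub_mulVec, add_mulVec, one_mulVec] at this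
    linear_combination (norm := module) this
  have hμ1 : 1 - μ ≠ 0 := by
    intro h
    rw [h, zero_smul, show 1 + μ = 2 by linear_combination -h] at hHy
    exact hy (smul_eq_zero.mp hHy.symm |>.resolve_left two_ne_zero)
  refine Complex.norm_lt_one_of_re_one_add_div_one_sub_pos (hH _ ?_)
  refine mem_spectrum_iff_exists_mulVec_eq_smul.mpr ⟨y, hy, ?_⟩
  rw [div_eq_inv_mul, mul_smul, ← hHy, smul_smul, inv_mul_cancel₀ hμ1, one_smul]

section

attribute [local instance] Matrix.linftyOpNormedRing Matrix.linftyOpNormedAlgebra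

theorem tendsto_cayley_pow {H : Matrix ι ι ℂ} (hH : ∀ μ ∈ spectrum ℂ H, 0 < μ.re) :
    Tendsto (cayley H ^ ·) atTop (𝓝 0) :=
  spectrum.tendsto_pow_atTop_nhds_zero_of_norm_lt_one fun _ => norm_lt_one_of_mem_spectrum_cayley hH

end

theorem lyapunovMap_injective {H : Matrix ι ι ℂ} (hH : ∀ μ ∈ spectrum ℂ H, 0 < μ.re) :
    Function.Injective (lyapunovMap H) := by
  intro X Y hXY
  rw [← sub_eq_zero]
  refine eq_zero_of_conjTranspose_mul_mul_eq (tendsto_cayley_pow hH) ?_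
  have h := sub_conjTranspose_cayley_mul_mul (isUnit_add_one_of_re_pos hH) (X - Y)
  rw [map_sub, hXY, sub_self, Matrix.mul_zero, Matrix.zero_mul, smul_zero, sub_eq_zero] at h
  exact h.symm

theorem lyapunovMap_bijective {H : Matrix ι ι ℂ} (hH : ∀ μ ∈ spectrum ℂ H, 0 < μ.re) :
    Function.Bijective (lyapunovMap H) :=
  ⟨lyapunovMap_injective hH, LinearMap.injective_iff_surjective.mp (lyapunovMap_injective hH)⟩

theorem posSemidef_of_lyapunovMap_eq {H M X : Matrix ι ι ℂ}
    (hH : ∀ μ ∈ spectrum ℂ H, 0 < μ.re) (hM : M.PosSemidef) (hXM : lyapunovMap H X = M) :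
    X.PosSemidef := by
  have hX : X.IsHermitian :=
    lyapunovMap_injective hH (by rw [lyapunovMap_conjTranspose, hXM, hM.1.eq])
  refine posSemidef_of_posSemidef_sub_conjTranspose_mul_mul (tendsto_cayley_pow hH) hX ?_
  rw [sub_conjTranspose_cayley_mul_mul (isUnit_add_one_of_re_pos hH), hXM]
  exact (hM.conjTranspose_mul_mul_same _).smul (by norm_num)

theorem mulVec_eq_zero_of_lyapunovMap_eq {H M X : Matrix ι ι ℂ} (hX : X.IsHermitian)
    (hM : M.PosSemidef) (hXM : lyapunovMap H X = M) {x : ι → ℂ} (hx : X *ᵥ x = 0) :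
    M *ᵥ x = 0 := by
  have hxX : star x ᵥ* X = 0 := by
    rw [← hX.eq, ← star_mulVec, hx, star_zero]
  rw [← hM.dotProduct_mulVec_zero_iff, ← hXM, lyapunovMap_apply, add_mulVec, dotProduct_add,
    ← mulVec_mulVec, ← mulVec_mulVec, hx, mulVec_zero, dotProduct_zero, dotProduct_mulVec, hxX,
    zero_dotProduct, add_zero]

theorem mulVec_mulVec_eq_zero_of_lyapunovMap_eq {H M X : Matrix ι ι ℂ} (hX : X.IsHermitian)
    (hM : M.PosSemidef) (hXM : lyapunovMap H X = M) {x : ι → ℂ} (hx : X *ᵥ x = 0) :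
    X *ᵥ (H *ᵥ x) = 0 := by
  have h : X * H = M - Hᴴ * X := by rw [← hXM, lyapunovMap_apply, add_sub_cancel_left]
  rw [mulVec_mulVec, h, sub_mulVec, mulVec_eq_zero_of_lyapunovMap_eq hX hM hXM hx,
    ← mulVec_mulVec, hx, mulVec_zero, sub_zero]

theorem posDef_of_lyapunovMap_eq {H M X : Matrix ι ι ℂ} (hX : X.PosSemidef) (hM : M.PosSemidef)
    (hXM : lyapunovMap H X = M)
    (hHM : ∀ (μ : ℂ) (x : ι → ℂ), x ≠ 0 → H *ᵥ x = μ • x → M *ᵥ x ≠ 0) : X.PosDef := by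
  rw [hX.posDef_iff_isUnit, ← mulVec_injective_iff_isUnit, ← coe_mulVecLin,
    ← LinearMap.ker_eq_bot]
  by_contra hker
  obtain ⟨μ, x, hxX, hx, hHx⟩ := exists_mulVec_eq_smul_of_mulVec_mem hker
    fun _ hy => mulVec_mulVec_eq_zero_of_lyapunovMap_eq hX.1 hM hXM hy
  exact hHM μ x hx hHx (mulVec_eq_zero_of_lyapunovMap_eq hX.1 hM hXM hxX)

theorem riccati_eq_zero_iff_lyapunovMap_inv_eq {H M Y : Matrix ι ι ℂ} (hY : IsUnit Y) :
    H * Y + Y * Hᴴ - Y * M * Y = 0 ↔ lyapunovMap H Y⁻¹ = M := by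
  have hdet := (isUnit_iff_isUnit_det Y).mp hY
  have h : H * Y + Y * Hᴴ - Y * M * Y = Y * (lyapunovMap H Y⁻¹ - M) * Y := by
    calc H * Y + Y * Hᴴ - Y * M * Y = (Y * Y⁻¹) * H * Y + Y * Hᴴ * (Y⁻¹ * Y) - Y * M * Y := by
          rw [mul_nonsing_inv Y hdet, nonsing_inv_mul Y hdet, Matrix.one_mul, Matrix.mul_one]
      _ = _ := by rw [lyapunovMap_apply]; noncomm_ring
  rw [h, hY.mul_left_eq_zero, hY.mul_right_eq_zero, sub_eq_zero]

end

theorem mulVec_ne_zero_of_mul_eq_add_mul {ι n p K : Type*} [Fintype ι] [Fintype n]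
    [DecidableEq n] [Fintype p] [Field K] {F : Matrix n n K} {Z : Matrix n ι K}
    {V : Matrix n p K} {h : Matrix p ι K} {H : Matrix ι ι K} (hZ : Function.Injective Z.mulVec)
    (hFZ : F * Z = V * h + Z * H) {μ : K} (hμ : μ ∉ spectrum K F) {x : ι → K} (hx : x ≠ 0)
    (hHx : H *ᵥ x = μ • x) : h *ᵥ x ≠ 0 := by
  intro hhx
  refine hμ (mem_spectrum_iff_exists_mulVec_eq_smul.mpr ⟨Z *ᵥ x, ?_, ?_⟩)
  · exact fun h0 => hx (hZ (h0.trans (mulVec_zero Z).symm))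
  · rw [mulVec_mulVec, hFZ, add_mulVec, ← mulVec_mulVec, hhx, mulVec_zero, zero_add,
      ← mulVec_mulVec, hHx, mulVec_smul]

end Matrix

/-- Given a rational Arnoldi decomposition `F·Z = v·h + Z·H` with `[v Z]` of
full column rank, `H` upper triangular with diagonal entries `s i` of positive
real part and not eigenvalues of `F`, the algebraic Riccati equation
`H·Y + Y·Hᴴ − Y·(ZᴴBBᴴZ + hᴴh)·Y = 0` has a unique positive definite
solution. -/
theorem stmt4 (n j m : ℕ)
    (F : Matrix (Fin n) (Fin n) ℂ) (v : Fin n → ℂ)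
    (Z : Matrix (Fin n) (Fin j) ℂ) (h : Matrix (Fin 1) (Fin j) ℂ)
    (H : Matrix (Fin j) (Fin j) ℂ) (s : Fin j → ℂ)
    (htri : ∀ i k : Fin j, k < i → H i k = 0) (hdiag : ∀ i : Fin j, H i i = s i)
    (hrank : LinearIndependent ℂ
      (fun c : Fin 1 ⊕ Fin j =>
        (fromCols (Matrix.of fun i (_ : Fin 1) => v i) Z)ᵀ c))
    (hbrad : F * Z = (Matrix.of fun i (_ : Fin 1) => v i) * h + Z * H)
    (hre : ∀ i, 0 < (s i).re) (hspec : ∀ i, s i ∉ spectrum ℂ F)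
    (B : Matrix (Fin n) (Fin m) ℂ) :
    ∃! Y : Matrix (Fin j) (Fin j) ℂ,
      Y.PosDef ∧ H * Y + Y * Hᴴ - Y * (Zᴴ * B * Bᴴ * Z + hᴴ * h) * Y = 0 := by
  have hspecH : spectrum ℂ H = Set.range s := by
    rw [IsUpperTriangular.spectrum_eq fun i k hki => htri i k hki]
    exact congrArg Set.range (funext hdiag)
  have hH : ∀ μ ∈ spectrum ℂ H, 0 < μ.re := hspecH ▸ Set.forall_mem_range.2 hre
  have hZ : Function.Injective Z.mulVec := by
    rw [mulVec_injective_iff]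
    exact hrank.comp Sum.inr Sum.inr_injective
  have hBZ : (Zᴴ * B * Bᴴ * Z).PosSemidef := by
    simpa only [conjTranspose_mul, conjTranspose_conjTranspose, Matrix.mul_assoc] using
      posSemidef_conjTranspose_mul_self (Bᴴ * Z)
  have hh := posSemidef_conjTranspose_mul_self h
  set M := Zᴴ * B * Bᴴ * Z + hᴴ * h
  have hM : M.PosSemidef := hBZ.add hh
  have hHM : ∀ (μ : ℂ) (x : Fin j → ℂ), x ≠ 0 → H *ᵥ x = μ • x → M *ᵥ x ≠ 0 := by
    intro μ x hx hHx hMx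
    obtain ⟨i, rfl⟩ : μ ∈ Set.range s :=
      hspecH ▸ mem_spectrum_iff_exists_mulVec_eq_smul.mpr ⟨x, hx, hHx⟩
    refine mulVec_ne_zero_of_mul_eq_add_mul hZ hbrad (hspec i) hx hHx ?_
    rw [← conjTranspose_mul_self_mulVec_eq_zero]
    exact hBZ.mulVec_eq_zero_of_add_mulVec_eq_zero hh hMx
  obtain ⟨X, hXM⟩ := (lyapunovMap_bijective hH).2 M
  have hX : X.PosDef :=
    posDef_of_lyapunovMap_eq (posSemidef_of_lyapunovMap_eq hH hM hXM) hM hXM hHM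
  refine ⟨X⁻¹, ⟨hX.inv, ?_⟩, fun Y ⟨hY, hYM⟩ => ?_⟩
  · rwa [riccati_eq_zero_iff_lyapunovMap_inv_eq hX.inv.isUnit,
      nonsing_inv_nonsing_inv _ ((isUnit_iff_isUnit_det _).mp hX.isUnit)]
  · rw [riccati_eq_zero_iff_lyapunovMap_inv_eq hY.isUnit] at hYM
    rw [← lyapunovMap_injective hH (hYM.trans hXM.symm),
      nonsing_inv_nonsing_inv _ ((isUnit_iff_isUnit_det _).mp hY.isUnit)]
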